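/- Define, for t > 0 and x ∈ ℝ, (√𝔇 q_t)(x) = ∫_ℝ |θ|^{1/2}·e^{−4π²tθ²}·e^{2πixθ} dθ (a real number, since the imaginary part integrates to zero). Then there exists a constant C > 0 such that for all t > 0 and all x ∈ ℝ, |(√𝔇 q_t)(x)| ≤ C·t^{−3/4}·(1 + x²/t)^{−3/4}. -/

import Mathlib

open MeasureTheory

/-- The `1/2`-fractional derivative of the heat kernel `q_t`, defined via the Fourier
multiplier with symbol `|θ|^{1/2}` (a real number: the imaginary part integrates to zero). -/
noncomputable def sqrtDheat (t x : ℝ) : ℝ :=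
  (∫ θ : ℝ, ((|θ| ^ ((1:ℝ)/2) * Real.exp (-4 * Real.pi ^ 2 * t * θ ^ 2) : ℝ) : ℂ) *
      Complex.exp ((2 * Real.pi * x * θ : ℝ) * Complex.I)).re

/-!
For `0 < α < 1`, the substitution `s ↦ λ s` gives
`λ ^ α * K_α = ∫₀^∞ s ^ (-1 - α) * (1 - exp (-λ s)) ds`. With `α = 1/4` and `λ = 4π²θ²` this
writes the symbol `|θ|^{1/2} e^{-4π²θ²}` as a superposition of differences of Gaussians, and
Fubini turns `√𝔇 q₁(y)` into a constant times `∫₀^∞ s^{-5/4} (q₁(y) - q_{1+s}(y)) ds`.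
For `s ≤ 1` the mean value theorem in the time variable bounds the integrand by a multiple of
`s^{-1/4} / (1 + y²)`. For `s > 1` both kernels are at most `4√τ / (τ + y²)`, and
`∫₀^∞ s^{-3/4} / (s + a) ds` scales like `a^{-3/4}`: this is where the decay `(1 + y²)^{-3/4}`
comes from. Parabolic scaling `√𝔇 q_t(x) = t^{-3/4} √𝔇 q₁(x / √t)` reduces everything to `t = 1`.
-/

open Real Set

lemma integrableOn_Ioc_zero_one_rpow {p : ℝ} (hp : -1 < p) :
    IntegrableOn (fun s => s ^ p) (Ioc (0:ℝ) 1) :=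
  (intervalIntegrable_iff_integrableOn_Ioc_of_le zero_le_one).1
    (intervalIntegral.intervalIntegrable_rpow' hp)

lemma setIntegral_Ioc_zero_one_rpow {p : ℝ} (hp : -1 < p) :
    ∫ s in Ioc (0:ℝ) 1, s ^ p = 1 / (p + 1) := by
  rw [← intervalIntegral.integral_of_le zero_le_one, integral_rpow (Or.inl hp),
    zero_rpow (by linarith), one_rpow, sub_zero]

lemma integrableOn_Ioi_zero_of_abs_le_rpow {f : ℝ → ℝ} {p q C : ℝ} (hp : -1 < p) (hq : q < -1)
    (hf : ContinuousOn f (Ioi 0)) (hf₀ : ∀ s ∈ Ioc (0:ℝ) 1, |f s| ≤ C * s ^ p)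
    (hf₁ : ∀ s ∈ Ioi (1:ℝ), |f s| ≤ C * s ^ q) : IntegrableOn f (Ioi 0) := by
  rw [← Ioc_union_Ioi_eq_Ioi zero_le_one]
  refine IntegrableOn.union ?_ ?_
  · refine Integrable.mono' ((integrableOn_Ioc_zero_one_rpow hp).const_mul C)
      ((hf.mono Ioc_subset_Ioi_self).aestronglyMeasurable measurableSet_Ioc) ?_
    filter_upwards [ae_restrict_mem measurableSet_Ioc] with s hs using hf₀ s hs
  · refine Integrable.mono' ((integrableOn_Ioi_rpow_of_lt hq zero_lt_one).const_mul C)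
      ((hf.mono (Ioi_subset_Ioi zero_le_one)).aestronglyMeasurable measurableSet_Ioi) ?_
    filter_upwards [ae_restrict_mem measurableSet_Ioi] with s hs using hf₁ s hs

lemma setIntegral_Ioi_zero_comp_mul_left (g : ℝ → ℝ) {r : ℝ} (hr : 0 < r) :
    ∫ s in Ioi (0:ℝ), g (r * s) = r⁻¹ * ∫ s in Ioi (0:ℝ), g s := by
  simpa using integral_comp_mul_left_Ioi g 0 hr

lemma integrableOn_rpow_div_add {p a : ℝ} (hp₀ : -1 < p) (hp₁ : p < 0) (ha : 0 < a) :
    IntegrableOn (fun s => s ^ p / (s + a)) (Ioi 0) := by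
  refine integrableOn_Ioi_zero_of_abs_le_rpow (C := a⁻¹ + 1) (p := p) (q := p - 1)
    hp₀ (by linarith) ?_ ?_ ?_
  · exact ContinuousOn.div
      (fun s hs => (continuousAt_rpow_const s _ (Or.inl (ne_of_gt hs))).continuousWithinAt)
      (by fun_prop) fun s hs => by linarith [mem_Ioi.1 hs]
  · intro s hs
    have hsp := rpow_nonneg hs.1.le p
    rw [abs_of_nonneg (div_nonneg hsp (by linarith [hs.1]))]
    calc s ^ p / (s + a) ≤ s ^ p / a := by gcongr; linarith [hs.1]
      _ = a⁻¹ * s ^ p := by ring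
      _ ≤ (a⁻¹ + 1) * s ^ p := by gcongr; linarith
  · intro s hs
    have hs₀ : (0:ℝ) < s := zero_lt_one.trans hs
    rw [abs_of_nonneg (div_nonneg (rpow_nonneg hs₀.le _) (by linarith)), rpow_sub_one hs₀.ne']
    calc s ^ p / (s + a) ≤ s ^ p / s := by gcongr; linarith
      _ ≤ (a⁻¹ + 1) * (s ^ p / s) := le_mul_of_one_le_left (by positivity)
          (by linarith [inv_nonneg.2 ha.le])

lemma integral_rpow_div_add (p : ℝ) {a : ℝ} (ha : 0 < a) :
    ∫ s in Ioi (0:ℝ), s ^ p / (s + a) = a ^ p * ∫ u in Ioi (0:ℝ), u ^ p / (u + 1) := by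
  have hscale := setIntegral_Ioi_zero_comp_mul_left (fun s => s ^ p / (s + a)) ha
  have hpt : ∀ u ∈ Ioi (0:ℝ), (a * u) ^ p / (a * u + a) = a ^ p * a⁻¹ * (u ^ p / (u + 1)) :=
    fun u hu => by
      rw [mul_rpow ha.le (le_of_lt hu)]
      field_simp
  rw [setIntegral_congr_fun measurableSet_Ioi hpt, integral_const_mul] at hscale
  calc _ = a * (a⁻¹ * ∫ s in Ioi (0:ℝ), s ^ p / (s + a)) := by field_simp
    _ = a ^ p * ∫ u in Ioi (0:ℝ), u ^ p / (u + 1) := by rw [← hscale]; field_simp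

section Subordination

variable {α : ℝ}

lemma integrableOn_rpow_mul_one_sub_exp_neg (hα₀ : 0 < α) (hα₁ : α < 1) :
    IntegrableOn (fun s => s ^ (-1 - α) * (1 - exp (-s))) (Ioi 0) := by
  refine integrableOn_Ioi_zero_of_abs_le_rpow (C := 1) (p := -α) (q := -1 - α)
    (by linarith) (by linarith) ?_ ?_ ?_
  · exact ContinuousOn.mul
      (fun s hs => (continuousAt_rpow_const s _ (Or.inl (ne_of_gt hs))).continuousWithinAt)
      (by fun_prop)
  · intro s hs
    have h1 : 0 ≤ 1 - exp (-s) := by simp [hs.1.le]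
    rw [abs_of_nonneg (mul_nonneg (rpow_nonneg hs.1.le _) h1), one_mul,
      show -α = -1 - α + 1 by ring, rpow_add_one hs.1.ne']
    exact mul_le_mul_of_nonneg_left (by linarith [add_one_le_exp (-s)]) (rpow_nonneg hs.1.le _)
  · intro s hs
    have hs0 : (0:ℝ) < s := zero_lt_one.trans hs
    have h1 : 0 ≤ 1 - exp (-s) := by simp [hs0.le]
    rw [abs_of_nonneg (mul_nonneg (rpow_nonneg hs0.le _) h1), one_mul]
    exact mul_le_of_le_one_right (rpow_nonneg hs0.le _) (by linarith [exp_pos (-s)])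

noncomputable def subordinationConst (α : ℝ) : ℝ :=
  ∫ s in Ioi (0:ℝ), s ^ (-1 - α) * (1 - exp (-s))

lemma subordinationConst_pos (hα₀ : 0 < α) (hα₁ : α < 1) : 0 < subordinationConst α := by
  have hsupp : (Function.support fun s : ℝ => s ^ (-1 - α) * (1 - exp (-s))) ∩ Ioi 0 = Ioi 0 :=
    inter_eq_right.2 fun s hs =>
      (mul_pos (rpow_pos_of_pos (mem_Ioi.1 hs) _) (by simpa using (mem_Ioi.1 hs))).ne'
  rw [subordinationConst, setIntegral_pos_iff_support_of_nonneg_ae _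
    (integrableOn_rpow_mul_one_sub_exp_neg hα₀ hα₁), hsupp, volume_Ioi]
  · exact ENNReal.zero_lt_top
  · filter_upwards [ae_restrict_mem measurableSet_Ioi] with s hs
    exact mul_nonneg (rpow_nonneg (le_of_lt hs) _) (by simpa using (le_of_lt hs))

lemma integral_rpow_mul_one_sub_exp_neg_mul {r : ℝ} (hr : 0 < r) :
    ∫ s in Ioi (0:ℝ), s ^ (-1 - α) * (1 - exp (-(r * s))) = r ^ α * subordinationConst α := by
  have hscale := setIntegral_Ioi_zero_comp_mul_left
    (fun u => u ^ (-1 - α) * (1 - exp (-u))) hr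
  have hpt : ∀ s ∈ Ioi (0:ℝ), (r * s) ^ (-1 - α) * (1 - exp (-(r * s)))
      = r ^ (-1 - α) * (s ^ (-1 - α) * (1 - exp (-(r * s)))) := fun s hs => by
    rw [mul_rpow hr.le (le_of_lt hs)]; ring
  rw [setIntegral_congr_fun measurableSet_Ioi hpt, integral_const_mul] at hscale
  have hinv : r ^ (1 + α) * r ^ (-1 - α) = 1 := by rw [← rpow_add hr]; simp
  calc _ = r ^ (1 + α) *
        (r ^ (-1 - α) * ∫ s in Ioi (0:ℝ), s ^ (-1 - α) * (1 - exp (-(r * s)))) := by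
        rw [← mul_assoc, hinv, one_mul]
    _ = r ^ α * subordinationConst α := by
        rw [hscale, subordinationConst, rpow_add hr, rpow_one]; field_simp

lemma integral_rpow_mul_exp_sub_exp (hα₀ : 0 < α) (t : ℝ) {r : ℝ} (hr : 0 ≤ r) :
    ∫ s in Ioi (0:ℝ), s ^ (-1 - α) * (exp (-(t * r)) - exp (-((t + s) * r))) =
      subordinationConst α * r ^ α * exp (-(t * r)) := by
  rcases hr.eq_or_lt with rfl | hr
  · simp [zero_rpow hα₀.ne']
  have hpt : ∀ s, s ^ (-1 - α) * (exp (-(t * r)) - exp (-((t + s) * r)))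
      = exp (-(t * r)) * (s ^ (-1 - α) * (1 - exp (-(r * s)))) := fun s => by
    rw [show -((t + s) * r) = -(t * r) + -(r * s) by ring, exp_add]; ring
  simp_rw [hpt]
  rw [integral_const_mul, integral_rpow_mul_one_sub_exp_neg_mul hr]
  ring

end Subordination

lemma exp_neg_le_inv_one_add {u : ℝ} (hu : -1 < u) : exp (-u) ≤ (1 + u)⁻¹ := by
  rw [exp_neg]
  exact inv_anti₀ (by linarith) (by linarith [add_one_le_exp u])

lemma one_add_sq_mul_exp_neg_le {u : ℝ} (hu : 0 ≤ u) : (1 + u) ^ 2 * exp (-u) ≤ 4 := by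
  have h : (1 + u / 2) ^ 2 ≤ exp u := by
    calc (1 + u / 2) ^ 2 ≤ exp (u / 2) ^ 2 :=
          pow_le_pow_left₀ (by linarith) (by linarith [add_one_le_exp (u / 2)]) 2
      _ = exp u := by rw [sq, ← exp_add, add_halves]
  calc (1 + u) ^ 2 * exp (-u) ≤ 4 * (1 + u / 2) ^ 2 * exp (-u) := by
        gcongr; nlinarith
    _ ≤ 4 * exp u * exp (-u) := by gcongr
    _ = 4 := by rw [mul_assoc, ← exp_add, add_neg_cancel, exp_zero, mul_one]

noncomputable def heatKernel (τ y : ℝ) : ℝ := (√(4 * π * τ))⁻¹ * exp (-y ^ 2 / (4 * τ))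

lemma heatKernel_nonneg (τ y : ℝ) : 0 ≤ heatKernel τ y := by
  unfold heatKernel; positivity

lemma ofReal_exp_mul_cexp_eq_cexp_quadratic (τ y θ : ℝ) :
    ((exp (-4 * π ^ 2 * τ * θ ^ 2) : ℝ) : ℂ) * Complex.exp ((2 * π * y * θ : ℝ) * Complex.I) =
      Complex.exp (((-(4 * π ^ 2 * τ) : ℝ) : ℂ) * θ ^ 2 + 2 * π * y * Complex.I * θ + 0) := by
  rw [Complex.ofReal_exp, ← Complex.exp_add]
  push_cast; ring_nf

lemma integrable_exp_mul_cexp {τ : ℝ} (hτ : 0 < τ) (y : ℝ) :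
    Integrable fun θ : ℝ => ((exp (-4 * π ^ 2 * τ * θ ^ 2) : ℝ) : ℂ) *
      Complex.exp ((2 * π * y * θ : ℝ) * Complex.I) := by
  simp_rw [ofReal_exp_mul_cexp_eq_cexp_quadratic]
  exact integrable_cexp_quadratic'
    (by rw [Complex.ofReal_re]; exact neg_neg_of_pos (by positivity)) _ _

lemma integral_exp_mul_cexp_eq_heatKernel {τ : ℝ} (hτ : 0 < τ) (y : ℝ) :
    ∫ θ : ℝ, ((exp (-4 * π ^ 2 * τ * θ ^ 2) : ℝ) : ℂ) *
        Complex.exp ((2 * π * y * θ : ℝ) * Complex.I) = heatKernel τ y := by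
  simp_rw [ofReal_exp_mul_cexp_eq_cexp_quadratic]
  rw [integral_cexp_quadratic (by rw [Complex.ofReal_re]; exact neg_neg_of_pos (by positivity))]
  have hπ : (π : ℂ) / -((-(4 * π ^ 2 * τ) : ℝ) : ℂ) = (((4 * π * τ)⁻¹ : ℝ) : ℂ) := by
    push_cast; field_simp
  have hexp : (0 : ℂ) - (2 * π * y * Complex.I) ^ 2 / (4 * ((-(4 * π ^ 2 * τ) : ℝ) : ℂ)) =
      ((-y ^ 2 / (4 * τ) : ℝ) : ℂ) := by
    push_cast; field_simp; rw [Complex.I_sq]; ring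
  rw [hπ, hexp, ← Complex.ofReal_exp, show (1 / 2 : ℂ) = ((1 / 2 : ℝ) : ℂ) by norm_num,
    ← Complex.ofReal_cpow (by positivity), ← sqrt_eq_rpow, sqrt_inv, heatKernel,
    Complex.ofReal_mul]

lemma integral_exp_eq_heatKernel {τ : ℝ} (hτ : 0 < τ) :
    ∫ θ : ℝ, exp (-4 * π ^ 2 * τ * θ ^ 2) = heatKernel τ 0 := by
  have h := integral_exp_mul_cexp_eq_heatKernel hτ 0
  simp only [mul_zero, zero_mul, Complex.ofReal_zero, Complex.exp_zero, mul_one] at h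
  exact_mod_cast h

lemma integrable_exp_neg_four_pi_sq_mul {τ : ℝ} (hτ : 0 < τ) :
    Integrable fun θ : ℝ => exp (-4 * π ^ 2 * τ * θ ^ 2) := by
  simpa [neg_mul] using integrable_exp_neg_mul_sq (b := 4 * π ^ 2 * τ) (by positivity)

lemma hasDerivAt_heatKernel (y : ℝ) {τ : ℝ} (hτ : 0 < τ) :
    HasDerivAt (fun τ => heatKernel τ y)
      (heatKernel τ y * (y ^ 2 / (4 * τ ^ 2) - 1 / (2 * τ))) τ := by
  have h4 : 0 < 4 * π * τ := by positivity
  have hsqrt : HasDerivAt (fun σ => (√(4 * π * σ))⁻¹)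
      (-(4 * π / (2 * √(4 * π * τ))) / √(4 * π * τ) ^ 2) τ := by
    have h := (((hasDerivAt_id τ).const_mul (4 * π)).sqrt h4.ne').inv (sqrt_pos.2 h4).ne'
    simp only [mul_one, id] at h
    exact h
  have hexp : HasDerivAt (fun σ => exp (-y ^ 2 * (4 * σ)⁻¹))
      (exp (-y ^ 2 * (4 * τ)⁻¹) * (-y ^ 2 * (-4 / (4 * τ) ^ 2))) τ := by
    simpa using ((((hasDerivAt_id τ).const_mul 4).inv (by positivity)).const_mul (-y ^ 2)).exp
  refine ((hsqrt.mul hexp).congr_deriv ?_).congr_of_eventuallyEq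
    (Filter.Eventually.of_forall fun σ => by simp only [heatKernel, div_eq_mul_inv]; rfl)
  simp only [heatKernel, sq_sqrt h4.le]
  field_simp
  ring

lemma heatKernel_le_exp {τ : ℝ} (hτ : 1 ≤ τ) (y : ℝ) :
    heatKernel τ y ≤ exp (-y ^ 2 / (4 * τ)) :=
  mul_le_of_le_one_left (exp_nonneg _)
    (inv_le_one_of_one_le₀ (one_le_sqrt.2 (by nlinarith [pi_gt_three])))

lemma heatKernel_le_sqrt_div {τ : ℝ} (hτ : 0 < τ) (y : ℝ) :
    heatKernel τ y ≤ 4 * √τ / (τ + y ^ 2) := by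
  have hsqrt : (√(4 * π * τ))⁻¹ ≤ (√τ)⁻¹ :=
    inv_anti₀ (sqrt_pos.2 hτ) (sqrt_le_sqrt (by nlinarith [pi_gt_three]))
  have hexp : exp (-y ^ 2 / (4 * τ)) ≤ (1 + y ^ 2 / (4 * τ))⁻¹ := by
    rw [neg_div]
    exact exp_neg_le_inv_one_add (by linarith [show 0 ≤ y ^ 2 / (4 * τ) by positivity])
  have hτ' : √τ ^ 2 = τ := sq_sqrt hτ.le
  have hsτ : 0 < √τ := sqrt_pos.2 hτ
  calc heatKernel τ y ≤ (√τ)⁻¹ * (1 + y ^ 2 / (4 * τ))⁻¹ :=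
        mul_le_mul hsqrt hexp (exp_nonneg _) (by positivity)
    _ = 4 * √τ / (4 * τ + y ^ 2) := by
        field_simp; exact hτ'.symm
    _ ≤ 4 * √τ / (τ + y ^ 2) := by gcongr; linarith

lemma abs_heatKernel_mul_sub_le {τ : ℝ} (hτ₁ : 1 ≤ τ) (hτ₂ : τ ≤ 2) (y : ℝ) :
    |heatKernel τ y * (y ^ 2 / (4 * τ ^ 2) - 1 / (2 * τ))| ≤ 64 / (1 + y ^ 2) := by
  set u := y ^ 2 / 8 with hu_def
  have hu : 0 ≤ u := by positivity
  have hτ₀ : 0 < τ := by linarith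
  have hq : heatKernel τ y ≤ exp (-u) :=
    (heatKernel_le_exp hτ₁ y).trans (exp_le_exp.2 (by
      rw [neg_div, neg_le_neg_iff]
      exact div_le_div_of_nonneg_left (sq_nonneg y) (by positivity) (by linarith)))
  have hfactor : |y ^ 2 / (4 * τ ^ 2) - 1 / (2 * τ)| ≤ 2 * (1 + u) := by
    have h1 : y ^ 2 / (4 * τ ^ 2) ≤ y ^ 2 / 4 :=
      div_le_div_of_nonneg_left (sq_nonneg y) (by norm_num) (by nlinarith)
    have h2 : 1 / (2 * τ) ≤ 1 / 2 :=
      div_le_div_of_nonneg_left (by norm_num) (by norm_num) (by linarith)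
    have h3 : 0 ≤ y ^ 2 / (4 * τ ^ 2) := by positivity
    have h4 : 0 ≤ 1 / (2 * τ) := by positivity
    rw [abs_le]; constructor <;> linarith
  have hdecay : (1 + u) * exp (-u) ≤ 4 / (1 + u) := by
    rw [le_div_iff₀ (by linarith)]; nlinarith [one_add_sq_mul_exp_neg_le hu]
  rw [abs_mul, abs_of_nonneg (heatKernel_nonneg τ y)]
  calc heatKernel τ y * |y ^ 2 / (4 * τ ^ 2) - 1 / (2 * τ)| ≤ exp (-u) * (2 * (1 + u)) :=
        mul_le_mul hq hfactor (abs_nonneg _) (exp_nonneg _)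
    _ ≤ 2 * (4 / (1 + u)) := by linarith
    _ ≤ 64 / (1 + y ^ 2) := by
        rw [show 2 * (4 / (1 + u)) = 64 / (8 + y ^ 2) by field_simp; ring]
        gcongr; norm_num

lemma abs_heatKernel_sub_le {s : ℝ} (hs₀ : 0 ≤ s) (hs₁ : s ≤ 1) (y : ℝ) :
    |heatKernel (1 + s) y - heatKernel 1 y| ≤ 64 / (1 + y ^ 2) * s := by
  have h := norm_image_sub_le_of_norm_deriv_le_segment' (a := 1) (b := 2)
    (fun τ hτ => (hasDerivAt_heatKernel y (by linarith [hτ.1])).hasDerivWithinAt)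
    (fun τ hτ => abs_heatKernel_mul_sub_le hτ.1 hτ.2.le y) (1 + s) ⟨by linarith, by linarith⟩
  simpa using h

noncomputable def weightedHeatDiff (y s : ℝ) : ℝ :=
  s ^ (-5/4 : ℝ) * (heatKernel 1 y - heatKernel (1 + s) y)

lemma continuousOn_weightedHeatDiff (y : ℝ) : ContinuousOn (weightedHeatDiff y) (Ioi 0) := by
  intro s hs
  have hq : ContinuousAt (fun σ => heatKernel (1 + σ) y) s :=
    (hasDerivAt_heatKernel y (by linarith [mem_Ioi.1 hs] : (0:ℝ) < 1 + s)).continuousAt.comp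
      (by fun_prop)
  exact ((continuousAt_rpow_const s _ (Or.inl (ne_of_gt hs))).mul
    (continuousAt_const.sub hq)).continuousWithinAt

lemma abs_weightedHeatDiff_le_of_le_one {s : ℝ} (hs₀ : 0 < s) (hs₁ : s ≤ 1) (y : ℝ) :
    |weightedHeatDiff y s| ≤ 64 / (1 + y ^ 2) * s ^ (-1/4 : ℝ) := by
  rw [weightedHeatDiff, abs_mul, abs_of_pos (rpow_pos_of_pos hs₀ _), abs_sub_comm]
  calc s ^ (-5/4 : ℝ) * |heatKernel (1 + s) y - heatKernel 1 y|
      ≤ s ^ (-5/4 : ℝ) * (64 / (1 + y ^ 2) * s) := by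
        gcongr; exact abs_heatKernel_sub_le hs₀.le hs₁ y
    _ = 64 / (1 + y ^ 2) * s ^ (-1/4 : ℝ) := by
        rw [show (-1/4 : ℝ) = -5/4 + 1 by norm_num, rpow_add_one hs₀.ne']; ring

lemma abs_weightedHeatDiff_le_of_one_lt {s : ℝ} (hs : 1 < s) (y : ℝ) :
    |weightedHeatDiff y s| ≤
      4 / (1 + y ^ 2) * s ^ (-5/4 : ℝ) + 8 * (s ^ (-3/4 : ℝ) / (s + (1 + y ^ 2))) := by
  have hs₀ : 0 < s := zero_lt_one.trans hs
  have h₁ : heatKernel 1 y ≤ 4 / (1 + y ^ 2) := by simpa using heatKernel_le_sqrt_div one_pos y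
  have h₂ : heatKernel (1 + s) y ≤ 8 * √s / (s + (1 + y ^ 2)) := by
    refine (heatKernel_le_sqrt_div (by linarith) y).trans ?_
    have : √(1 + s) ≤ 2 * √s := by
      rw [show 2 * √s = √(2 ^ 2 * s) by simp [sqrt_mul]]
      exact sqrt_le_sqrt (by linarith)
    rw [show 1 + s + y ^ 2 = s + (1 + y ^ 2) by ring,
      div_le_div_iff_of_pos_right (by positivity)]
    linarith
  have hdiff : |heatKernel 1 y - heatKernel (1 + s) y| ≤ heatKernel 1 y + heatKernel (1 + s) y := by
    rw [abs_le]; constructor <;> linarith [heatKernel_nonneg 1 y, heatKernel_nonneg (1 + s) y]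
  have hsqrt : s ^ (-5/4 : ℝ) * √s = s ^ (-3/4 : ℝ) := by
    rw [sqrt_eq_rpow, ← rpow_add hs₀]; norm_num
  rw [weightedHeatDiff, abs_mul, abs_of_pos (rpow_pos_of_pos hs₀ _)]
  calc s ^ (-5/4 : ℝ) * |heatKernel 1 y - heatKernel (1 + s) y|
      ≤ s ^ (-5/4 : ℝ) * (4 / (1 + y ^ 2) + 8 * √s / (s + (1 + y ^ 2))) := by
        gcongr; linarith
    _ = 4 / (1 + y ^ 2) * s ^ (-5/4 : ℝ) + 8 * (s ^ (-3/4 : ℝ) / (s + (1 + y ^ 2))) := by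
        rw [← hsqrt]; ring

lemma integrableOn_Ioc_weightedHeatDiff (y : ℝ) : IntegrableOn (weightedHeatDiff y) (Ioc 0 1) :=
  Integrable.mono' ((integrableOn_Ioc_zero_one_rpow (by norm_num : (-1:ℝ) < -1/4)).const_mul _)
    (((continuousOn_weightedHeatDiff y).mono Ioc_subset_Ioi_self).aestronglyMeasurable
      measurableSet_Ioc)
    ((ae_restrict_mem measurableSet_Ioc).mono fun s hs =>
      abs_weightedHeatDiff_le_of_le_one hs.1 hs.2 y)

lemma abs_setIntegral_Ioc_weightedHeatDiff_le (y : ℝ) :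
    |∫ s in Ioc (0:ℝ) 1, weightedHeatDiff y s| ≤ 86 / (1 + y ^ 2) := by
  refine (norm_integral_le_of_norm_le
    ((integrableOn_Ioc_zero_one_rpow (by norm_num : (-1:ℝ) < -1/4)).const_mul (64 / (1 + y ^ 2)))
    ((ae_restrict_mem measurableSet_Ioc).mono fun s hs => by
      rw [Real.norm_eq_abs]; exact abs_weightedHeatDiff_le_of_le_one hs.1 hs.2 y)).trans ?_
  rw [integral_const_mul, setIntegral_Ioc_zero_one_rpow (by norm_num)]
  rw [div_mul_eq_mul_div, div_le_div_iff_of_pos_right (by positivity)]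
  norm_num

lemma integrableOn_Ioi_one_weightedHeatDiff_majorant (y : ℝ) :
    IntegrableOn (fun s => 4 / (1 + y ^ 2) * s ^ (-5/4 : ℝ) +
      8 * (s ^ (-3/4 : ℝ) / (s + (1 + y ^ 2)))) (Ioi 1) :=
  ((integrableOn_Ioi_rpow_of_lt (by norm_num) one_pos).const_mul _).add
    (((integrableOn_rpow_div_add (by norm_num) (by norm_num) (by positivity)).mono_set
      (Ioi_subset_Ioi zero_le_one)).const_mul 8)

lemma integrableOn_Ioi_one_weightedHeatDiff (y : ℝ) : IntegrableOn (weightedHeatDiff y) (Ioi 1) :=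
  (integrableOn_Ioi_one_weightedHeatDiff_majorant y).mono'
    (((continuousOn_weightedHeatDiff y).mono (Ioi_subset_Ioi zero_le_one)).aestronglyMeasurable
      measurableSet_Ioi)
    ((ae_restrict_mem measurableSet_Ioi).mono fun _ hs =>
      abs_weightedHeatDiff_le_of_one_lt hs y)

lemma abs_setIntegral_Ioi_one_weightedHeatDiff_le (y : ℝ) :
    |∫ s in Ioi (1:ℝ), weightedHeatDiff y s| ≤ 16 / (1 + y ^ 2) +
      8 * ((1 + y ^ 2) ^ (-3/4 : ℝ) * ∫ u in Ioi (0:ℝ), u ^ (-3/4 : ℝ) / (u + 1)) := by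
  have ha : (0:ℝ) < 1 + y ^ 2 := by positivity
  refine (norm_integral_le_of_norm_le (integrableOn_Ioi_one_weightedHeatDiff_majorant y)
    ((ae_restrict_mem measurableSet_Ioi).mono fun s hs => by
      rw [Real.norm_eq_abs]; exact abs_weightedHeatDiff_le_of_one_lt hs y)).trans ?_
  have htail : ∫ s in Ioi (1:ℝ), s ^ (-3/4 : ℝ) / (s + (1 + y ^ 2)) ≤
      ∫ s in Ioi (0:ℝ), s ^ (-3/4 : ℝ) / (s + (1 + y ^ 2)) :=
    setIntegral_mono_set (integrableOn_rpow_div_add (by norm_num) (by norm_num) ha)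
      ((ae_restrict_mem measurableSet_Ioi).mono fun s hs =>
        div_nonneg (rpow_nonneg (le_of_lt hs) _) (by linarith [mem_Ioi.1 hs]))
      (Ioi_subset_Ioi zero_le_one).eventuallyLE
  rw [integral_add ((integrableOn_Ioi_rpow_of_lt (by norm_num) one_pos).const_mul _)
      (((integrableOn_rpow_div_add (by norm_num) (by norm_num) ha).mono_set
        (Ioi_subset_Ioi zero_le_one)).const_mul 8),
    integral_const_mul, integral_const_mul, integral_Ioi_rpow_of_lt (by norm_num) one_pos,
    ← integral_rpow_div_add _ ha, one_rpow, show -1 / (-5/4 + 1 : ℝ) = 4 by norm_num,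
    show 4 / (1 + y ^ 2) * 4 = 16 / (1 + y ^ 2) by ring]
  linarith

lemma integrableOn_weightedHeatDiff (y : ℝ) : IntegrableOn (weightedHeatDiff y) (Ioi 0) := by
  rw [← Ioc_union_Ioi_eq_Ioi zero_le_one]
  exact (integrableOn_Ioc_weightedHeatDiff y).union (integrableOn_Ioi_one_weightedHeatDiff y)

lemma exists_abs_integral_weightedHeatDiff_le :
    ∃ C, ∀ y, |∫ s in Ioi (0:ℝ), weightedHeatDiff y s| ≤ C * (1 + y ^ 2) ^ (-3/4 : ℝ) := by
  refine ⟨102 + 8 * ∫ u in Ioi (0:ℝ), u ^ (-3/4 : ℝ) / (u + 1), fun y => ?_⟩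
  have h₁ := abs_setIntegral_Ioc_weightedHeatDiff_le y
  have h₂ := abs_setIntegral_Ioi_one_weightedHeatDiff_le y
  rw [div_eq_mul_one_div 86] at h₁
  rw [div_eq_mul_one_div 16] at h₂
  set S := ∫ u in Ioi (0:ℝ), u ^ (-3/4 : ℝ) / (u + 1)
  set P := (1 + y ^ 2) ^ (-3/4 : ℝ)
  have hinv : 1 / (1 + y ^ 2) ≤ P := by
    rw [one_div, ← rpow_neg_one]
    exact rpow_le_rpow_of_exponent_le (le_add_of_nonneg_right (sq_nonneg y)) (by norm_num)
  rw [← Ioc_union_Ioi_eq_Ioi zero_le_one, setIntegral_union (Ioc_disjoint_Ioi le_rfl)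
    measurableSet_Ioi (integrableOn_Ioc_weightedHeatDiff y)
    (integrableOn_Ioi_one_weightedHeatDiff y)]
  calc _ ≤ _ := abs_add_le _ _
    _ ≤ 102 * P + 8 * (P * S) := by linarith
    _ = (102 + 8 * S) * P := by ring

noncomputable def sqrtDheatIntegrand (t x θ : ℝ) : ℂ :=
  ((|θ| ^ ((1:ℝ)/2) * exp (-4 * π ^ 2 * t * θ ^ 2) : ℝ) : ℂ) *
    Complex.exp ((2 * π * x * θ : ℝ) * Complex.I)

lemma sqrtDheat_eq_re_integral (t x : ℝ) :
    sqrtDheat t x = (∫ θ, sqrtDheatIntegrand t x θ).re := rfl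

noncomputable def subordinationIntegrand (y s θ : ℝ) : ℂ :=
  ((s ^ (-5/4 : ℝ) * (exp (-4 * π ^ 2 * θ ^ 2) - exp (-4 * π ^ 2 * (1 + s) * θ ^ 2)) : ℝ) : ℂ) *
    Complex.exp ((2 * π * y * θ : ℝ) * Complex.I)

lemma subordinationIntegrand_eq (y s θ : ℝ) :
    subordinationIntegrand y s θ = ((s ^ (-5/4 : ℝ) : ℝ) : ℂ) *
      (((exp (-4 * π ^ 2 * 1 * θ ^ 2) : ℝ) : ℂ) * Complex.exp ((2 * π * y * θ : ℝ) * Complex.I) -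
        ((exp (-4 * π ^ 2 * (1 + s) * θ ^ 2) : ℝ) : ℂ) *
          Complex.exp ((2 * π * y * θ : ℝ) * Complex.I)) := by
  rw [subordinationIntegrand, mul_one]; push_cast; ring

lemma integral_subordinationIntegrand {s : ℝ} (hs : 0 < s) (y : ℝ) :
    ∫ θ, subordinationIntegrand y s θ = weightedHeatDiff y s := by
  simp_rw [subordinationIntegrand_eq]
  rw [integral_const_mul, integral_sub (integrable_exp_mul_cexp one_pos y)
    (integrable_exp_mul_cexp (by linarith) y), integral_exp_mul_cexp_eq_heatKernel one_pos,
    integral_exp_mul_cexp_eq_heatKernel (by linarith), weightedHeatDiff]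
  push_cast; ring

lemma integral_norm_subordinationIntegrand {s : ℝ} (hs : 0 < s) (y : ℝ) :
    ∫ θ, ‖subordinationIntegrand y s θ‖ = weightedHeatDiff 0 s := by
  have hnorm : ∀ θ : ℝ, ‖subordinationIntegrand y s θ‖ =
      s ^ (-5/4 : ℝ) * (exp (-4 * π ^ 2 * 1 * θ ^ 2) - exp (-4 * π ^ 2 * (1 + s) * θ ^ 2)) := by
    intro θ
    have hle : exp (-4 * π ^ 2 * (1 + s) * θ ^ 2) ≤ exp (-4 * π ^ 2 * θ ^ 2) :=
      exp_le_exp.2 (by nlinarith [pi_pos, sq_nonneg θ, mul_nonneg (sq_nonneg π) (sq_nonneg θ)])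
    rw [subordinationIntegrand, norm_mul, Complex.norm_exp_ofReal_mul_I, mul_one,
      Complex.norm_real, norm_of_nonneg (mul_nonneg (rpow_nonneg hs.le _) (by linarith)), mul_one]
  simp_rw [hnorm]
  rw [integral_const_mul, integral_sub (integrable_exp_neg_four_pi_sq_mul one_pos)
    (integrable_exp_neg_four_pi_sq_mul (by linarith)), integral_exp_eq_heatKernel one_pos,
    integral_exp_eq_heatKernel (by linarith), weightedHeatDiff]

lemma integrable_subordinationIntegrand (y : ℝ) :
    Integrable (Function.uncurry (subordinationIntegrand y))
      ((volume.restrict (Ioi (0:ℝ))).prod volume) := by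
  have hmeas : AEStronglyMeasurable (Function.uncurry (subordinationIntegrand y))
      ((volume.restrict (Ioi (0:ℝ))).prod volume) := by
    apply Measurable.aestronglyMeasurable
    unfold subordinationIntegrand Function.uncurry
    fun_prop
  refine (integrable_prod_iff hmeas).2 ⟨?_, ?_⟩
  · filter_upwards [ae_restrict_mem measurableSet_Ioi] with s hs
    simp_rw [Function.uncurry_apply_pair, subordinationIntegrand_eq]
    exact ((integrable_exp_mul_cexp one_pos y).sub
      (integrable_exp_mul_cexp (by linarith [mem_Ioi.1 hs]) y)).const_mul _
  · refine (integrableOn_weightedHeatDiff 0).congr ?_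
    filter_upwards [ae_restrict_mem measurableSet_Ioi] with s hs
    exact (integral_norm_subordinationIntegrand hs y).symm

lemma setIntegral_subordinationIntegrand (y θ : ℝ) :
    ∫ s in Ioi (0:ℝ), subordinationIntegrand y s θ =
      (((4 * π ^ 2) ^ (1/4 : ℝ) * subordinationConst (1/4) : ℝ) : ℂ) *
        sqrtDheatIntegrand 1 y θ := by
  have h := integral_rpow_mul_exp_sub_exp (α := 1/4) (by norm_num) 1
    (r := 4 * π ^ 2 * θ ^ 2) (by positivity)
  have hr : (4 * π ^ 2 * θ ^ 2) ^ (1/4 : ℝ) = (4 * π ^ 2) ^ (1/4 : ℝ) * |θ| ^ (1/2 : ℝ) := by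
    have hθ : (θ ^ 2) ^ (1/4 : ℝ) = |θ| ^ (1/2 : ℝ) := by
      rw [← sq_abs θ, ← rpow_natCast, ← rpow_mul (abs_nonneg θ)]; norm_num
    rw [mul_rpow (by positivity) (sq_nonneg θ), hθ]
  have hpt : ∀ s : ℝ, s ^ (-1 - 1/4 : ℝ) * (exp (-(1 * (4 * π ^ 2 * θ ^ 2))) -
      exp (-((1 + s) * (4 * π ^ 2 * θ ^ 2)))) =
      s ^ (-5/4 : ℝ) * (exp (-4 * π ^ 2 * θ ^ 2) - exp (-4 * π ^ 2 * (1 + s) * θ ^ 2)) := by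
    intro s; ring_nf
  simp_rw [hpt] at h
  simp only [subordinationIntegrand, sqrtDheatIntegrand]
  rw [integral_mul_const, integral_complex_ofReal, h, hr]
  push_cast; ring_nf

lemma mul_sqrtDheat_one_eq_integral_weightedHeatDiff (y : ℝ) :
    (4 * π ^ 2) ^ (1/4 : ℝ) * subordinationConst (1/4) * sqrtDheat 1 y =
      ∫ s in Ioi (0:ℝ), weightedHeatDiff y s := by
  have hswap := integral_integral_swap (integrable_subordinationIntegrand y)
  simp_rw [setIntegral_subordinationIntegrand] at hswap
  rw [integral_const_mul, setIntegral_congr_fun measurableSet_Ioi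
    (fun s hs => integral_subordinationIntegrand hs y), integral_complex_ofReal] at hswap
  rw [sqrtDheat_eq_re_integral, ← Complex.re_ofReal_mul, ← hswap, Complex.ofReal_re]

lemma sqrtDheatIntegrand_inv_sqrt_mul {t : ℝ} (ht : 0 < t) (x u : ℝ) :
    sqrtDheatIntegrand t x ((√t)⁻¹ * u) =
      (((√t)⁻¹ ^ (1/2 : ℝ) : ℝ) : ℂ) * sqrtDheatIntegrand 1 (x / √t) u := by
  have hc : 0 < (√t)⁻¹ := inv_pos.2 (sqrt_pos.2 ht)
  have habs : |(√t)⁻¹ * u| ^ (1/2 : ℝ) = (√t)⁻¹ ^ (1/2 : ℝ) * |u| ^ (1/2 : ℝ) := by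
    rw [abs_mul, abs_of_pos hc, mul_rpow hc.le (abs_nonneg u)]
  have hexp : -4 * π ^ 2 * t * ((√t)⁻¹ * u) ^ 2 = -4 * π ^ 2 * 1 * u ^ 2 := by
    rw [mul_pow, inv_pow, sq_sqrt ht.le]; field_simp
  have hphase : 2 * π * x * ((√t)⁻¹ * u) = 2 * π * (x / √t) * u := by ring
  simp only [sqrtDheatIntegrand]
  rw [habs, hexp, hphase]
  push_cast; ring

lemma sqrtDheat_eq_rpow_mul_sqrtDheat_one {t : ℝ} (ht : 0 < t) (x : ℝ) :
    sqrtDheat t x = t ^ (-(3:ℝ)/4) * sqrtDheat 1 (x / √t) := by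
  have hst : 0 < √t := sqrt_pos.2 ht
  have hscale := Measure.integral_comp_mul_left (sqrtDheatIntegrand t x) (√t)⁻¹
  simp_rw [sqrtDheatIntegrand_inv_sqrt_mul ht, integral_const_mul, inv_inv,
    abs_of_pos hst, Complex.real_smul] at hscale
  have hpow : (√t)⁻¹ * (√t)⁻¹ ^ (1/2 : ℝ) = t ^ (-(3:ℝ)/4) := by
    rw [sqrt_eq_rpow, ← rpow_neg ht.le, ← rpow_mul ht.le, ← rpow_add ht]; norm_num
  have hint : ∫ θ, sqrtDheatIntegrand t x θ =
      ((t ^ (-(3:ℝ)/4) : ℝ) : ℂ) * ∫ u, sqrtDheatIntegrand 1 (x / √t) u := by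
    rw [← hpow, Complex.ofReal_mul, mul_assoc, hscale, ← mul_assoc, ← Complex.ofReal_mul,
      inv_mul_cancel₀ hst.ne', Complex.ofReal_one, one_mul]
  rw [sqrtDheat_eq_re_integral, hint, Complex.re_ofReal_mul, sqrtDheat_eq_re_integral]

lemma exists_abs_sqrtDheat_one_le :
    ∃ C > (0:ℝ), ∀ y, |sqrtDheat 1 y| ≤ C * (1 + y ^ 2) ^ (-(3:ℝ)/4) := by
  obtain ⟨C, hC⟩ := exists_abs_integral_weightedHeatDiff_le
  have hc : 0 < (4 * π ^ 2) ^ (1/4 : ℝ) * subordinationConst (1/4) :=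
    mul_pos (rpow_pos_of_pos (by positivity) _) (subordinationConst_pos (by norm_num) (by norm_num))
  refine ⟨max C 1 / ((4 * π ^ 2) ^ (1/4 : ℝ) * subordinationConst (1/4)), by positivity,
    fun y => ?_⟩
  rw [div_mul_eq_mul_div, le_div_iff₀ hc, ← abs_of_pos hc, ← abs_mul, mul_comm,
    mul_sqrtDheat_one_eq_integral_weightedHeatDiff]
  exact (hC y).trans (by gcongr; exact le_max_left C 1)

/-- Pointwise bound `|(√𝔇 q_t)(x)| ≲ t^{-3/4} ⟨x/√t⟩^{-3/2}`. -/
theorem stmt_13 :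
    ∃ C > (0:ℝ), ∀ t : ℝ, 0 < t → ∀ x : ℝ,
      |sqrtDheat t x| ≤ C * t ^ (-(3:ℝ)/4) * (1 + x ^ 2 / t) ^ (-(3:ℝ)/4) := by
  obtain ⟨C, hC, hbound⟩ := exists_abs_sqrtDheat_one_le
  refine ⟨C, hC, fun t ht x => ?_⟩
  rw [sqrtDheat_eq_rpow_mul_sqrtDheat_one ht, abs_mul, abs_of_pos (rpow_pos_of_pos ht _)]
  calc t ^ (-(3:ℝ)/4) * |sqrtDheat 1 (x / √t)|
      ≤ t ^ (-(3:ℝ)/4) * (C * (1 + (x / √t) ^ 2) ^ (-(3:ℝ)/4)) := by gcongr; exact hbound _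
    _ = C * t ^ (-(3:ℝ)/4) * (1 + x ^ 2 / t) ^ (-(3:ℝ)/4) := by
        rw [div_pow, sq_sqrt ht.le]; ring
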